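/- Let G be a finite group with subgroups H, K such that (G,H) and (G,K) are both Gelfand pairs (every irreducible representation has at most one-dimensional H-invariant and K-invariant subspaces). Then Σ_{π∈Ĝ, π^H≠0, π^K≠0} (dim π) · |⟨v_H, v_K⟩_π|² = |G|·|H∩K|/(|H|·|K|), where v_H, v_K are unit invariant vectors in π. -/

import Mathlib

/-!
Averaging over `H` is `|H|` times the orthogonal projection onto `π^H`, which by the Gelfand
property is the rank-one projection onto `v_H`; hence `∑_{h ∈ H, k ∈ K} χ_π(hk)` equals
`|H| |K| |⟨v_H, v_K⟩|²`. Expanding the character of the regular representation in irreducible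
characters (Maschke and Schur orthogonality) gives `∑_π (dim π) χ_π = |G| δ_1`, so summing against
`dim π` counts the pairs `(h, k)` with `hk = 1`, which are the pairs `(x, x⁻¹)` with `x ∈ H ∩ K`.
-/

open scoped InnerProductSpace

/-- The subspace of vectors fixed by every element of a subgroup `H` under a
representation `ρ`. -/
def fixedSpace {k G V : Type*} [CommSemiring k] [Group G] [AddCommMonoid V] [Module k V]
    (ρ : Representation k G V) (H : Subgroup G) : Submodule k V where
  carrier := {v | ∀ h ∈ H, ρ h v = v}
  add_mem' := by
    intro a b ha hb h hh
    simp [map_add, ha h hh, hb h hh]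
  zero_mem' := by
    intro h hh
    simp
  smul_mem' := by
    intro c a ha h hh
    simp [map_smul, ha h hh]

/-- Two representations are isomorphic. -/
def RepIso {G V W : Type} [Group G] [AddCommGroup V] [Module ℂ V] [AddCommGroup W]
    [Module ℂ W] (ρ : Representation ℂ G V) (σ : Representation ℂ G W) : Prop :=
  ∃ e : V ≃ₗ[ℂ] W, ∀ (g : G) (v : V), e (ρ g v) = σ g (e v)

open Module LinearMap Representation InnerProductSpace

theorem Representation.isIrreducible_iff_forall_submodule {k G V : Type*} [Field k] [Group G]
    [AddCommGroup V] [Module k V] (ρ : Representation k G V) :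
    ρ.IsIrreducible ↔ Nontrivial V ∧
      ∀ U : Submodule k V, (∀ g v, v ∈ U → ρ g v ∈ U) → U = ⊥ ∨ U = ⊤ := by
  constructor
  · intro h
    refine ⟨?_, fun U hU => ?_⟩
    · by_contra hV
      rw [not_nontrivial_iff_subsingleton] at hV
      exact bot_ne_top (α := Subrepresentation ρ) (Subrepresentation.ext (Subsingleton.elim _ _))
    · exact (h.eq_bot_or_eq_top ⟨U, fun g v hv => hU g v hv⟩).imp
        (congrArg Subrepresentation.toSubmodule) (congrArg Subrepresentation.toSubmodule)
  · rintro ⟨hV, h⟩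
    refine { exists_pair_ne := ⟨⊥, ⊤, fun e => ?_⟩, eq_bot_or_eq_top := fun U => ?_ }
    · exact bot_ne_top congr(Subrepresentation.toSubmodule $e)
    · exact (h U.toSubmodule fun g v hv => U.apply_mem_toSubmodule g hv).imp
        Subrepresentation.ext Subrepresentation.ext

theorem repIso_iff_nonempty_equiv {G V W : Type} [Group G] [AddCommGroup V] [Module ℂ V]
    [AddCommGroup W] [Module ℂ W] (ρ : Representation ℂ G V) (σ : Representation ℂ G W) :
    RepIso ρ σ ↔ Nonempty (ρ.Equiv σ) :=
  ⟨fun ⟨e, he⟩ => ⟨.mk e fun g => LinearMap.ext (he g)⟩,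
    fun ⟨φ⟩ => ⟨φ.toLinearEquiv, φ.toIntertwiningMap.isIntertwining⟩⟩

theorem Subgroup.card_pairs_mul_eq_one {G : Type*} [Group G] (H K : Subgroup G)
    [Fintype H] [Fintype K] [Fintype ↥(H ⊓ K)] [DecidableEq G] :
    Fintype.card {p : H × K // (p.1 : G) * p.2 = 1} = Fintype.card ↥(H ⊓ K) :=
  Fintype.card_congr
    { toFun p := ⟨p.1.1, p.1.1.2, by rw [eq_inv_of_mul_eq_one_left p.2]; exact K.inv_mem p.1.2.2⟩
      invFun x := ⟨(⟨x, x.2.1⟩, ⟨x⁻¹, K.inv_mem x.2.2⟩), mul_inv_cancel _⟩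
      left_inv p := by
        ext
        · rfl
        · exact (eq_inv_of_mul_eq_one_right p.2).symm
      right_inv x := rfl }

section Characters

theorem Subrepresentation.character_add_character_of_isCompl {k G W : Type*} [Field k]
    [Group G] [AddCommGroup W] [Module k W] [FiniteDimensional k W]
    {σ : Representation k G W} {U U' : Subrepresentation σ} (h : IsCompl U U') (g : G) :
    U.toRepresentation.character g + U'.toRepresentation.character g = σ.character g := by
  have hc : IsCompl U.toSubmodule U'.toSubmodule :=
    ⟨disjoint_iff.mpr congr(Subrepresentation.toSubmodule $(disjoint_iff.mp h.1)),
      codisjoint_iff.mpr congr(Subrepresentation.toSubmodule $(codisjoint_iff.mp h.2))⟩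
  have hconj : (Submodule.prodEquivOfIsCompl _ _ hc).conj
      ((U.toRepresentation g).prodMap (U'.toRepresentation g)) = σ g := by
    ext v
    simp [LinearEquiv.conj_apply, Subrepresentation.toRepresentation, ← map_add,
      Submodule.projection_add_projection_eq_self]
  simp only [character, ← hconj, trace_conj', trace_prodMap']

theorem Representation.character_leftRegular {k G : Type*} [Field k] [Group G] [Fintype G]
    [DecidableEq G] (g : G) :
    (leftRegular k G).character g = if g = 1 then (Fintype.card G : k) else 0 := by
  have hdiag : ∀ x : G, (MonoidAlgebra.basis G k).repr (MonoidAlgebra.single (g * x) 1) x =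
      if g * x = x then 1 else 0 := fun x => by
    rw [← MonoidAlgebra.basis_apply, Basis.repr_self, Finsupp.single_apply]
  rw [character, trace_eq_matrix_trace k (MonoidAlgebra.basis G k), Matrix.trace]
  simp only [Matrix.diag_apply, toMatrix_apply, MonoidAlgebra.basis_apply, ofMulAction_single,
    smul_eq_mul, hdiag, mul_eq_right, Finset.sum_boole]
  split_ifs with hg <;> simp [hg]

variable {G : Type} [Group G] [Fintype G]

/-- On characters this is the hermitian inner product, since `χ(g⁻¹) = conj (χ g)`. -/
noncomputable def charPairing (f f' : G → ℂ) : ℂ :=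
  (Nat.card G : ℂ)⁻¹ * ∑ g, f g * f' g⁻¹

theorem charPairing_add_left (f₁ f₂ f' : G → ℂ) :
    charPairing (f₁ + f₂) f' = charPairing f₁ f' + charPairing f₂ f' := by
  simp only [charPairing, Pi.add_apply, add_mul, Finset.sum_add_distrib, mul_add]

theorem charPairing_character_leftRegular {V : Type*} [AddCommGroup V] [Module ℂ V]
    [FiniteDimensional ℂ V] (ρ : Representation ℂ G V) :
    charPairing (leftRegular ℂ G).character ρ.character = finrank ℂ V := by
  classical
  simp [charPairing, character_leftRegular, Nat.card_eq_fintype_card]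

variable {ι : Type} {V : ι → Type} [∀ i, AddCommGroup (V i)] [∀ i, Module ℂ (V i)]
  [∀ i, FiniteDimensional ℂ (V i)] {ρ : ∀ i, Representation ℂ G (V i)}
  [∀ i, (ρ i).IsIrreducible]

variable (ρ) in
def ExhaustsIrreducibles : Prop :=
  ∀ (W : Type) [AddCommGroup W] [Module ℂ W] [FiniteDimensional ℂ W]
    (σ : Representation ℂ G W), σ.IsIrreducible → ∃ i, Nonempty (σ.Equiv (ρ i))

theorem charPairing_character_character [DecidableEq ι]
    (hdistinct : ∀ i j, Nonempty ((ρ i).Equiv (ρ j)) → i = j) (i j : ι) :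
    charPairing (ρ i).character (ρ j).character = if i = j then 1 else 0 := by
  have : Invertible (Nat.card G : ℂ) := invertibleOfNonzero (by simp)
  classical
  rw [charPairing, char_orthonormal]
  by_cases hij : i = j
  · subst hij
    simpa using ⟨Representation.Equiv.refl (ρ i)⟩
  · simpa [hij] using ⟨fun e => hij (hdistinct j i ⟨e⟩).symm⟩

variable (ρ) in
theorem character_eq_sum_charPairing_smul [Fintype ι] [DecidableEq ι]
    (hdistinct : ∀ i j, Nonempty ((ρ i).Equiv (ρ j)) → i = j)
    (hcomplete : ExhaustsIrreducibles ρ)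
    {W : Type} [AddCommGroup W] [Module ℂ W] [FiniteDimensional ℂ W]
    (σ : Representation ℂ G W) :
    σ.character = ∑ i, charPairing σ.character (ρ i).character • (ρ i).character := by
  induction hn : finrank ℂ W using Nat.strong_induction_on generalizing W with
  | _ n IH =>
  rcases subsingleton_or_nontrivial W with hW | hW
  · have hzero : σ.character = 0 := funext fun g => by
      simp [character, Subsingleton.elim (σ g) 0]
    simp [hzero, charPairing]
  by_cases hσ : σ.IsIrreducible
  · obtain ⟨j, ⟨φ⟩⟩ := hcomplete W σ hσ
    simp [char_iso φ, charPairing_character_character hdistinct]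
  obtain ⟨U, hU, hUbot, hUtop⟩ :
      ∃ U : Submodule ℂ W, (∀ g v, v ∈ U → σ g v ∈ U) ∧ U ≠ ⊥ ∧ U ≠ ⊤ := by
    simpa [isIrreducible_iff_forall_submodule, hW, or_iff_not_imp_left] using hσ
  have : NeZero (Nat.card G : ℂ) := ⟨by simp⟩
  let Uσ : Subrepresentation σ := ⟨U, hU⟩
  obtain ⟨U', hc⟩ := exists_isCompl Uσ
  have hadd : σ.character = Uσ.toRepresentation.character + U'.toRepresentation.character :=
    funext fun g => (Subrepresentation.character_add_character_of_isCompl hc g).symm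
  have hUlt : finrank ℂ U < n := hn ▸ Submodule.finrank_lt hUtop
  have hU'lt : finrank ℂ U'.toSubmodule < n := by
    refine hn ▸ Submodule.finrank_lt fun h => hUbot ?_
    have : U' = ⊤ := Subrepresentation.ext h
    exact congrArg Subrepresentation.toSubmodule (eq_bot_of_isCompl_top (this ▸ hc))
  calc σ.character = Uσ.toRepresentation.character + U'.toRepresentation.character := hadd
    _ = ∑ i, charPairing Uσ.toRepresentation.character (ρ i).character • (ρ i).character +
        ∑ i, charPairing U'.toRepresentation.character (ρ i).character • (ρ i).character :=
      congrArg₂ (· + ·) (IH _ hUlt Uσ.toRepresentation rfl) (IH _ hU'lt U'.toRepresentation rfl)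
    _ = _ := by simp only [hadd, charPairing_add_left, add_smul, Finset.sum_add_distrib]

variable (ρ) in
theorem sum_finrank_mul_character [Fintype ι] [DecidableEq G]
    (hdistinct : ∀ i j, Nonempty ((ρ i).Equiv (ρ j)) → i = j)
    (hcomplete : ExhaustsIrreducibles ρ)
    (g : G) :
    ∑ i, (finrank ℂ (V i) : ℂ) * (ρ i).character g =
      if g = 1 then (Fintype.card G : ℂ) else 0 := by
  classical
  have := congrFun (character_eq_sum_charPairing_smul ρ hdistinct hcomplete (leftRegular ℂ G)) g
  simpa [charPairing_character_leftRegular, character_leftRegular] using this.symm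

variable (ρ) in
theorem sum_finrank_mul_sum_sum_character [Fintype ι]
    (hdistinct : ∀ i j, Nonempty ((ρ i).Equiv (ρ j)) → i = j)
    (hcomplete : ExhaustsIrreducibles ρ)
    (H K : Subgroup G) [Fintype H] [Fintype K] [Fintype ↥(H ⊓ K)] :
    ∑ i, (finrank ℂ (V i) : ℂ) * ∑ h : H, ∑ k : K, (ρ i).character (h * k) =
      Fintype.card G * Fintype.card ↥(H ⊓ K) := by
  classical
  calc ∑ i, (finrank ℂ (V i) : ℂ) * ∑ h : H, ∑ k : K, (ρ i).character (h * k)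
      = ∑ p : H × K, ∑ i, (finrank ℂ (V i) : ℂ) * (ρ i).character (p.1 * p.2) := by
        simp only [Finset.mul_sum, Fintype.sum_prod_type]
        rw [Finset.sum_comm]
        exact Finset.sum_congr rfl fun h _ => Finset.sum_comm
    _ = Fintype.card G * Fintype.card {p : H × K // (p.1 : G) * p.2 = 1} := by
        simp [sum_finrank_mul_character ρ hdistinct hcomplete, Fintype.card_subtype, Finset.sum_ite,
          mul_comm]
    _ = Fintype.card G * Fintype.card ↥(H ⊓ K) := by rw [H.card_pairs_mul_eq_one K]

end Characters

section Invariants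

variable {𝕜 G E : Type*} [RCLike 𝕜] [Group G] [NormedAddCommGroup E] [InnerProductSpace 𝕜 E]
  [FiniteDimensional 𝕜 E]

theorem Submodule.starProjection_eq_rankOne_of_finrank_le_one {K : Submodule 𝕜 E}
    (hK : finrank 𝕜 K ≤ 1) {v : E} (hv : v ∈ K) (hv1 : K ≠ ⊥ → ‖v‖ = 1)
    (hv0 : K = ⊥ → v = 0) : K.starProjection = rankOne 𝕜 v v := by
  by_cases hbot : K = ⊥
  · subst hbot
    simp [hv0 rfl, Submodule.starProjection_bot]
  have hv1 := hv1 hbot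
  have hrank : finrank 𝕜 K = 1 :=
    le_antisymm hK (Submodule.one_le_finrank_iff.mpr hbot)
  rw [eq_span_singleton_of_mem_of_finrank_eq_one hrank hv (by rintro rfl; simp at hv1)]
  ext x
  simp [Submodule.starProjection_singleton, hv1]

variable {ρ : Representation 𝕜 G E} (hρ : ∀ g v w, ⟪ρ g v, ρ g w⟫_𝕜 = ⟪v, w⟫_𝕜)
include hρ

theorem starProjection_fixedSpace_apply (H : Subgroup G) [Fintype H] (x : E) :
    (fixedSpace ρ H).starProjection x = (Fintype.card H : 𝕜)⁻¹ • ∑ h : H, ρ h x := by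
  refine Submodule.eq_starProjection_of_mem_of_inner_eq_zero ?_ fun w hw => ?_
  · refine Submodule.smul_mem _ _ fun h₀ hh₀ => ?_
    rw [map_sum]
    exact Fintype.sum_equiv (Equiv.mulLeft ⟨h₀, hh₀⟩) _ _ fun h => by
      simp [← Module.End.mul_apply, ← map_mul]
  · have hterm : ∀ h : H, ⟪ρ h x, w⟫_𝕜 = ⟪x, w⟫_𝕜 := fun h => by
      rw [← hρ h x w, hw h h.2]
    simp [inner_sub_left, inner_smul_left, sum_inner, hterm]

theorem sum_subgroup_eq_card_smul_rankOne (H : Subgroup G) [Fintype H]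
    (hH : finrank 𝕜 (fixedSpace ρ H) ≤ 1) {v : E} (hv : v ∈ fixedSpace ρ H)
    (hv1 : fixedSpace ρ H ≠ ⊥ → ‖v‖ = 1) (hv0 : fixedSpace ρ H = ⊥ → v = 0) :
    ∑ h : H, ρ h = (Fintype.card H : 𝕜) • (rankOne 𝕜 v v : E →ₗ[𝕜] E) := by
  ext x
  have hproj := starProjection_fixedSpace_apply hρ H x
  rw [Submodule.starProjection_eq_rankOne_of_finrank_le_one hH hv hv1 hv0] at hproj
  simp [hproj, smul_smul]

theorem sum_sum_character_mul_eq (H K : Subgroup G) [Fintype H] [Fintype K]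
    (hH : finrank 𝕜 (fixedSpace ρ H) ≤ 1) {vH : E} (hvH : vH ∈ fixedSpace ρ H)
    (hvH1 : fixedSpace ρ H ≠ ⊥ → ‖vH‖ = 1) (hvH0 : fixedSpace ρ H = ⊥ → vH = 0)
    (hK : finrank 𝕜 (fixedSpace ρ K) ≤ 1) {vK : E} (hvK : vK ∈ fixedSpace ρ K)
    (hvK1 : fixedSpace ρ K ≠ ⊥ → ‖vK‖ = 1) (hvK0 : fixedSpace ρ K = ⊥ → vK = 0) :
    ∑ h : H, ∑ k : K, ρ.character (h * k) =
      Fintype.card H * Fintype.card K * (‖⟪vH, vK⟫_𝕜‖ ^ 2 : ℝ) := by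
  calc ∑ h : H, ∑ k : K, ρ.character (h * k)
      = trace 𝕜 E ((∑ h : H, ρ h) * ∑ k : K, ρ k) := by
        simp [character, Finset.sum_mul_sum, map_sum]
    _ = _ := by
      rw [sum_subgroup_eq_card_smul_rankOne hρ H hH hvH hvH1 hvH0,
        sum_subgroup_eq_card_smul_rankOne hρ K hK hvK hvK1 hvK0]
      rw [smul_mul_smul_comm, Module.End.mul_eq_comp, ← ContinuousLinearMap.toLinearMap_comp,
        rankOne_comp_rankOne]
      simp only [map_smul, ContinuousLinearMap.toLinearMap_smul, trace_rankOne, smul_eq_mul]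
      rw [← inner_conj_symm vK vH, RCLike.mul_conj]
      push_cast
      ring

end Invariants

theorem stmt_1 {G : Type} [Group G] [Fintype G] (H K : Subgroup G)
    [Fintype H] [Fintype K] [Fintype ↥(H ⊓ K)]
    (ι : Type) [Fintype ι] (V : ι → Type)
    [∀ i, NormedAddCommGroup (V i)] [∀ i, InnerProductSpace ℂ (V i)]
    [∀ i, FiniteDimensional ℂ (V i)]
    (ρ : ∀ i, Representation ℂ G (V i))
    (hirr : ∀ i (U : Submodule ℂ (V i)), (∀ g v, v ∈ U → ρ i g v ∈ U) → U = ⊥ ∨ U = ⊤)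
    (hnontriv : ∀ i, Nontrivial (V i))
    (hinv : ∀ i (g : G) (v w : V i), ⟪ρ i g v, ρ i g w⟫_ℂ = ⟪v, w⟫_ℂ)
    (hcomplete : ∀ (W : Type) (_ : AddCommGroup W) (_ : Module ℂ W),
      FiniteDimensional ℂ W → Nontrivial W → ∀ σ : Representation ℂ G W,
        (∀ U : Submodule ℂ W, (∀ g v, v ∈ U → σ g v ∈ U) → U = ⊥ ∨ U = ⊤) →
        ∃ i, RepIso σ (ρ i))
    (hdistinct : ∀ i j, i ≠ j → ¬ RepIso (ρ i) (ρ j))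
    (hGelfandH : ∀ i, Module.finrank ℂ (fixedSpace (ρ i) H) ≤ 1)
    (hGelfandK : ∀ i, Module.finrank ℂ (fixedSpace (ρ i) K) ≤ 1)
    (vH vK : ∀ i, V i)
    (hvH : ∀ i, vH i ∈ fixedSpace (ρ i) H) (hvK : ∀ i, vK i ∈ fixedSpace (ρ i) K)
    (hvH1 : ∀ i, fixedSpace (ρ i) H ≠ ⊥ → ‖vH i‖ = 1)
    (hvK1 : ∀ i, fixedSpace (ρ i) K ≠ ⊥ → ‖vK i‖ = 1)
    (hvH0 : ∀ i, fixedSpace (ρ i) H = ⊥ → vH i = 0)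
    (hvK0 : ∀ i, fixedSpace (ρ i) K = ⊥ → vK i = 0) :
    ∑ i, (Module.finrank ℂ (V i) : ℝ) * ‖⟪vH i, vK i⟫_ℂ‖ ^ 2 =
      (Fintype.card G : ℝ) * (Fintype.card ↥(H ⊓ K) : ℝ) /
        ((Fintype.card H : ℝ) * (Fintype.card K : ℝ)) := by
  have : ∀ i, (ρ i).IsIrreducible := fun i =>
    (isIrreducible_iff_forall_submodule (ρ i)).mpr ⟨hnontriv i, hirr i⟩
  have hdistinct' : ∀ i j, Nonempty ((ρ i).Equiv (ρ j)) → i = j := fun i j h =>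
    by_contra fun hij => hdistinct i j hij ((repIso_iff_nonempty_equiv _ _).mpr h)
  have hcomplete' : ExhaustsIrreducibles ρ := by
    intro W _ _ _ σ hσ
    obtain ⟨hW, hσ⟩ := (isIrreducible_iff_forall_submodule σ).mp hσ
    obtain ⟨i, hi⟩ := hcomplete W _ _ inferInstance hW σ hσ
    exact ⟨i, (repIso_iff_nonempty_equiv _ _).mp hi⟩
  have hsum := sum_finrank_mul_sum_sum_character ρ hdistinct' hcomplete' H K
  simp only [fun i => sum_sum_character_mul_eq (hinv i) H K (hGelfandH i) (hvH i) (hvH1 i)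
    (hvH0 i) (hGelfandK i) (hvK i) (hvK1 i) (hvK0 i)] at hsum
  have hreal : ∑ i, (finrank ℂ (V i) : ℝ) *
      (Fintype.card H * Fintype.card K * ‖⟪vH i, vK i⟫_ℂ‖ ^ 2) =
      Fintype.card G * Fintype.card ↥(H ⊓ K) := by
    apply Complex.ofReal_injective
    push_cast at hsum ⊢
    exact hsum
  rw [eq_div_iff (by positivity), Finset.sum_mul, ← hreal]
  exact Finset.sum_congr rfl fun i _ => by ring
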